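/- In Λ(2l), the triple Massey product ⟨α_{p₁}, α_{p₂}, α_{p₃}⟩ vanishes: with S = x₂y₂^{p₁+p₂} and T = x₂y₂^{p₂+p₃} satisfying α_{p₁}α_{p₂}=dS and α_{p₂}α_{p₃}=dT, the element S·α_{p₃} − α_{p₁}·T is exact. -/
import Mathlib


namespace LoopSphereModel

noncomputable section

/-- Basis of the Sullivan model `Λ(2l) = Λ(y₁,x₁,y₂,x₂)` of the free loop space
`LS^{2l}`: `(e, a, p, f)` codes the monomial `y₁^e · x₁^a · y₂^p · x₂^f`
(`e, f ∈ {0,1}` since `y₁, x₂` are odd; `x₁, y₂` are even). -/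
abbrev Bas : Type := Bool × ℕ × ℕ × Bool

/-- The underlying ℚ-vector space of `Λ(2l)`. -/
abbrev Mod : Type := Bas →₀ ℚ

/-- The basis monomial `y₁^e x₁^a y₂^p x₂^f`. -/
def mon (b : Bas) : Mod := Finsupp.single b 1

/-- Degree of a basis monomial: `|y₁| = 2l-1`, `|x₁| = 2l`, `|y₂| = 4l-2`,
`|x₂| = 4l-1`. -/
def mdeg (l : ℕ) (b : Bas) : ℕ :=
  (if b.1 then 2 * l - 1 else 0) + b.2.1 * (2 * l) + b.2.2.1 * (4 * l - 2) +
    (if b.2.2.2 then 4 * l - 1 else 0)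

/-- The differential on basis monomials, obtained by extending
`dy₁ = dx₁ = 0`, `dx₂ = x₁²`, `dy₂ = -2x₁y₁` as a degree `+1` derivation:
`d(y₁^e x₁^a y₂^p x₂^f) = (-2p)·y₁ x₁^{a+1} y₂^{p-1} x₂^f` (only when `e = 0`)
`+ (-1)^e · y₁^e x₁^{a+2} y₂^p` (only when `f = 1`). -/
def dmon (b : Bas) : Mod :=
  (if b.1 then 0
    else (-(2 * (b.2.2.1 : ℚ))) • mon (true, b.2.1 + 1, b.2.2.1 - 1, b.2.2.2)) +
  (if b.2.2.2 then
      (if b.1 then (-1 : ℚ) else 1) • mon (b.1, b.2.1 + 2, b.2.2.1, false)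
    else 0)

/-- The differential of `Λ(2l)` as a linear map. -/
def dL : Mod →ₗ[ℚ] Mod :=
  Finsupp.lsum ℚ fun b => LinearMap.toSpanSingleton ℚ Mod (dmon b)

/-- Product of two basis monomials in the free graded-commutative algebra:
zero if an odd generator repeats, otherwise the reordered monomial with the
Koszul sign `(-1)^{e'·f}` (moving `y₁'` past `x₂^f`). -/
def monMul (b b' : Bas) : Mod :=
  if b.1 && b'.1 then 0
  else if b.2.2.2 && b'.2.2.2 then 0
  else (if b'.1 && b.2.2.2 then (-1 : ℚ) else 1) •
    mon (b.1 || b'.1, b.2.1 + b'.2.1, b.2.2.1 + b'.2.2.1, b.2.2.2 || b'.2.2.2)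

/-- The (graded-commutative) multiplication of `Λ(2l)`, extended bilinearly. -/
def mulF (x y : Mod) : Mod :=
  x.sum fun b c => y.sum fun b' c' => (c * c') • monMul b b'

/-- The cocycle `α_p := y₂^p x₁ - 2p · y₁ x₂ y₂^{p-1}`
(in canonical order `x₁ y₂^p - 2p · y₁ y₂^{p-1} x₂`). -/
def alphaEl (p : ℕ) : Mod :=
  mon (false, 1, p, false) - (2 * (p : ℚ)) • mon (true, 0, p - 1, true)

/-- The cocycle `β_p := y₁ y₂^p`. -/
def betaEl (p : ℕ) : Mod := mon (true, 0, p, false)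

lemma mulF_single (b b' : Bas) (c c' : ℚ) :
    mulF (Finsupp.single b c) (Finsupp.single b' c') = (c * c') • monMul b b' := by
  simp [mulF, Finsupp.sum_single_index]

lemma mulF_mon (b b' : Bas) : mulF (mon b) (mon b') = monMul b b' := by
  simp [mon, mulF_single]

lemma mulF_sub_left (x y z : Mod) : mulF (x - y) z = mulF x z - mulF y z := by
  unfold mulF
  rw [Finsupp.sum_sub_index]
  intro b c1 c2
  simp [sub_mul, sub_smul, Finsupp.sum_sub]

lemma mulF_sub_right (x y z : Mod) : mulF x (y - z) = mulF x y - mulF x z := by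
  unfold mulF
  rw [← Finsupp.sum_sub]
  refine Finsupp.sum_congr fun b _ => ?_
  rw [Finsupp.sum_sub_index]
  intro b' c1 c2
  simp [mul_sub, sub_smul]

lemma mulF_smul_left (r : ℚ) (x y : Mod) : mulF (r • x) y = r • mulF x y := by
  unfold mulF
  rw [Finsupp.sum_smul_index (by simp), Finsupp.smul_sum]
  refine Finsupp.sum_congr fun b _ => ?_
  rw [Finsupp.smul_sum]
  refine Finsupp.sum_congr fun b' _ => ?_
  rw [smul_smul]; ring_nf

lemma mulF_smul_right (r : ℚ) (x y : Mod) : mulF x (r • y) = r • mulF x y := by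
  unfold mulF
  rw [Finsupp.smul_sum]
  refine Finsupp.sum_congr fun b _ => ?_
  rw [Finsupp.sum_smul_index (by simp), Finsupp.smul_sum]
  refine Finsupp.sum_congr fun b' _ => ?_
  rw [smul_smul]; ring_nf

lemma dL_mon (b : Bas) : dL (mon b) = dmon b := by
  simp [dL, mon]

lemma key (p q : ℕ) :
    mulF (alphaEl p) (alphaEl q) = dL (mon (false, 0, p + q, true)) := by
  rw [dL_mon]
  unfold alphaEl
  rw [mulF_sub_left, mulF_sub_right, mulF_sub_right, mulF_smul_left,
    mulF_smul_left, mulF_smul_right, mulF_smul_right, mulF_mon, mulF_mon,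
    mulF_mon, mulF_mon]
  simp only [monMul, dmon]
  rcases p with _ | p <;> rcases q with _ | q <;>
    · simp only [Bool.and_self, Bool.and_true, Bool.and_false, Bool.true_and,
        Bool.false_and, Bool.or_self, Bool.or_true, Bool.true_or, Bool.false_or,
        if_true, if_false, Nat.succ_sub_one, Nat.add_sub_cancel, Nat.cast_zero,
        Nat.cast_add, Nat.cast_one, Nat.zero_add, Nat.add_zero, zero_add,
        add_zero, smul_zero, mul_zero, zero_smul, one_smul, Bool.false_eq_true,
        Bool.true_eq_false, ite_false, ite_true, Nat.zero_sub]
      try ring_nf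
      try rw [show 2 + p + q - 1 = 1 + p + q from by omega]
      try module

/-- The triple Massey product `⟨α_{p₁}, α_{p₂}, α_{p₃}⟩` in `Λ(2l)` vanishes:
with `S = x₂y₂^{p₁+p₂}` and `T = x₂y₂^{p₂+p₃}` satisfying `α_{p₁}α_{p₂} = dS`
and `α_{p₂}α_{p₃} = dT`, the representative `S·α_{p₃} - α_{p₁}·T` is exact. -/
theorem massey_alpha_alpha_alpha_zero : ∀ p₁ p₂ p₃ : ℕ,
    mulF (alphaEl p₁) (alphaEl p₂) = dL (mon (false, 0, p₁ + p₂, true)) ∧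
    mulF (alphaEl p₂) (alphaEl p₃) = dL (mon (false, 0, p₂ + p₃, true)) ∧
    ∃ s,
      mulF (mon (false, 0, p₁ + p₂, true)) (alphaEl p₃) -
          mulF (alphaEl p₁) (mon (false, 0, p₂ + p₃, true)) = dL s := by
  intro p₁ p₂ p₃
  refine ⟨key p₁ p₂, key p₂ p₃, 0, ?_⟩
  rw [map_zero]
  unfold alphaEl
  rw [mulF_sub_right, mulF_sub_left, mulF_smul_right, mulF_smul_left,
    mulF_mon, mulF_mon, mulF_mon, mulF_mon]
  simp [monMul, add_assoc]

end

end LoopSphereModel
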